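/- Let k be a field, V a k-vector space, A = S(V) the symmetric algebra, and M an A-central A-bimodule (i.e. a·m = m·a for all a ∈ A, m ∈ M). Then the Koszul homology differential vanishes: for every p ≥ 1, b^K = 0 on M ⊗ W_p. Consequently the Koszul homology is HK_p(A,M) = M ⊗ W_p for all p. -/

import Mathlib

open TensorProduct PiTensorProduct

set_option maxHeartbeats 1600000
set_option synthInstance.maxHeartbeats 400000

noncomputable section

variable (k : Type*) [Field k] (V : Type*) [AddCommGroup V] [Module k V]

/-- The `p`-th tensor power of `V` over `k`. -/
abbrev TP (p : ℕ) := PiTensorProduct k (fun _ : Fin p => V)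

/-- The antisymmetrizer map `Ant_p : V^{⊗p} → V^{⊗p}`,
`v_1 ⊗ ⋯ ⊗ v_p ↦ Σ_σ sgn(σ) v_{σ⁻¹(1)} ⊗ ⋯ ⊗ v_{σ⁻¹(p)}`. -/
def Ant (p : ℕ) : TP k V p →ₗ[k] TP k V p :=
  ∑ σ : Equiv.Perm (Fin p),
    (Equiv.Perm.sign σ : ℤ) • (PiTensorProduct.reindex k (fun _ : Fin p => V) σ).toLinearMap

/-- Canonical identification of tensor powers of equal degrees. -/
def tpCast {m n : ℕ} (h : m = n) : TP k V m ≃ₗ[k] TP k V n :=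
  PiTensorProduct.reindex k (fun _ : Fin m => V) (finCongr h)

/-- The canonical identification `V^{⊗p} ⊗ V^{⊗q} ≅ V^{⊗(p+q)}`. -/
def tpMul (p q : ℕ) : (TP k V p ⊗[k] TP k V q) ≃ₗ[k] TP k V (p + q) :=
  (PiTensorProduct.tmulEquiv (ι := Fin p) (ι₂ := Fin q) k V).trans
    (PiTensorProduct.reindex k (fun _ => V) finSumFinEquiv)

/-- The canonical identification `V^{⊗1} ≅ V`. -/
def oneEquiv : TP k V 1 ≃ₗ[k] V := PiTensorProduct.subsingletonEquiv (0 : Fin 1)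

/-- The canonical identification `V^{⊗0} ≅ k`. -/
def zeroEquiv : TP k V 0 ≃ₗ[k] k := PiTensorProduct.isEmptyEquiv (Fin 0)

/-- The image of `V^{⊗i} ⊗ R ⊗ V^{⊗j}` in `V^{⊗(i+2+j)}`. -/
def sandwich (Rq : Submodule k (TP k V 2)) (i j : ℕ) : Submodule k (TP k V (i + 2 + j)) :=
  LinearMap.range
    ((tpCast k V (show i + (2 + j) = i + 2 + j by omega)).toLinearMap ∘ₗ
      (tpMul k V i (2 + j)).toLinearMap ∘ₗ
      (LinearMap.lTensor (TP k V i)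
        ((tpMul k V 2 j).toLinearMap ∘ₗ LinearMap.rTensor (TP k V j) Rq.subtype)))

/-- The subspaces `W_p = ⋂_{i+2+j=p} V^{⊗i} ⊗ R ⊗ V^{⊗j}` (with `W_0 = k`, `W_1 = V`,
`W_2 = R`, these being the degenerate cases of the intersection). -/
def W (Rq : Submodule k (TP k V 2)) (p : ℕ) : Submodule k (TP k V p) :=
  ⨅ (i : ℕ) (j : ℕ) (h : i + 2 + j = p),
    Submodule.map (tpCast k V h).toLinearMap (sandwich k V Rq i j)

instance instTPAddCommGroup (p : ℕ) : AddCommGroup (TP k V p) := inferInstance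

instance instWAddCommGroup (Rq : Submodule k (TP k V 2)) (p : ℕ) :
    AddCommGroup (W k V Rq p) := Submodule.addCommGroup _

instance instWModule (Rq : Submodule k (TP k V 2)) (p : ℕ) :
    Module k (W k V Rq p) := Submodule.module _
variable (Rq : Submodule k (TP k V 2))

/-- A chosen `k`-linear projection of `V^{⊗p}` onto `W_p` (used only to produce canonical
restriction maps: all maps defined with it are independent of the choice on the relevant
subspaces). -/
def projW (p : ℕ) : TP k V p →ₗ[k] (W k V Rq p) :=
  (LinearMap.exists_leftInverse_of_injective (W k V Rq p).subtype
    (Submodule.ker_subtype _)).choose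

/-- The inclusion `W_r ⊆ W_p ⊗ W_q` (for `p + q = r`), decomposing a Koszul element. -/
def splitAt (p q r : ℕ) (h : p + q = r) :
    (W k V Rq r) →ₗ[k] (W k V Rq p) ⊗[k] (W k V Rq q) :=
  (TensorProduct.map (projW k V Rq p) (projW k V Rq q)) ∘ₗ
    (tpMul k V p q).symm.toLinearMap ∘ₗ (tpCast k V h.symm).toLinearMap ∘ₗ
    (W k V Rq r).subtype

/-- The identification `W_1 = V`. -/
def oneW : (W k V Rq 1) →ₗ[k] V := (oneEquiv k V).toLinearMap ∘ₗ (W k V Rq 1).subtype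

/-- Transport along an equality of degrees. -/
def wCast {a b : ℕ} (h : a = b) : (W k V Rq a) ≃ₗ[k] (W k V Rq b) := by
  subst h; exact LinearEquiv.refl k _

/-- The identification `V^{⊗2} ≅ V ⊗ V`. -/
def tp2 : TP k V 2 ≃ₗ[k] V ⊗[k] V :=
  (tpMul k V 1 1).symm ≪≫ₗ TensorProduct.congr (oneEquiv k V) (oneEquiv k V)

/-- The linear map `V ⊗ V → T(V)`, `x ⊗ y ↦ ι(x)·ι(y)`, precomposed with `V^{⊗2} ≅ V ⊗ V`. -/
def emb2 : TP k V 2 →ₗ[k] TensorAlgebra k V :=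
  LinearMap.mul' k (TensorAlgebra k V) ∘ₗ
    TensorProduct.map (TensorAlgebra.ι k) (TensorAlgebra.ι k) ∘ₗ (tp2 k V).toLinearMap

/-- The quadratic algebra `A = T(V)/(R)` associated with a subspace `R ⊆ V ⊗ V`. -/
def QuadAlg := RingQuot (fun a b : TensorAlgebra k V => a ∈ Submodule.map (emb2 k V) Rq ∧ b = 0)

instance : Ring (QuadAlg k V Rq) := by unfold QuadAlg; infer_instance
instance : Algebra k (QuadAlg k V Rq) := by unfold QuadAlg; infer_instance

/-- The canonical linear map `V → A = T(V)/(R)`. -/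
def ιQ : V →ₗ[k] QuadAlg k V Rq :=
  (RingQuot.mkAlgHom k _).toLinearMap ∘ₗ TensorAlgebra.ι k

/-- The subspace of `V^{⊗2}` spanned by the elements `x ⊗ y - y ⊗ x`. -/
def Rsym : Submodule k (TP k V 2) :=
  Submodule.span k {w : TP k V 2 | ∃ x y : V, w = (tp2 k V).symm (x ⊗ₜ[k] y - y ⊗ₜ[k] x)}

/-- The symmetric algebra `S(V) = T(V)/(R)` as a quadratic algebra. -/
def SV := QuadAlg k V (Rsym k V)

instance : Ring (SV k V) := by unfold SV; infer_instance
instance : Algebra k (SV k V) := by unfold SV; infer_instance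
/-- An (`k`-central) `A`-bimodule structure on a `k`-module `M`: commuting `k`-bilinear
left and right unital associative actions of `A`. -/
structure KBimod (A : Type*) [Ring A] [Algebra k A]
    (M : Type*) [AddCommGroup M] [Module k M] where
  actl : A →ₗ[k] M →ₗ[k] M
  actr : A →ₗ[k] M →ₗ[k] M
  actl_one : ∀ m, actl 1 m = m
  actl_mul : ∀ a b m, actl (a * b) m = actl a (actl b m)
  actr_one : ∀ m, actr 1 m = m
  actr_mul : ∀ a b m, actr (a * b) m = actr b (actr a m)
  actl_actr : ∀ a b m, actl a (actr b m) = actr b (actl a m)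

variable {A : Type*} [Ring A] [Algebra k A]
variable {M : Type*} [AddCommGroup M] [Module k M]

/-- The tautological bimodule structure of an algebra over itself. -/
def bimodSelf : KBimod k A A where
  actl := LinearMap.mul k A
  actr := (LinearMap.mul k A).flip
  actl_one := fun m => one_mul m
  actl_mul := fun a b m => mul_assoc a b m
  actr_one := fun m => mul_one m
  actr_mul := fun a b m => (mul_assoc m a b).symm
  actl_actr := fun a b m => (mul_assoc a m b).symm

variable {k}

/-- Left action as a map `A ⊗ M → M`. -/
def actLA (ρ : KBimod k A M) : A ⊗[k] M →ₗ[k] M := TensorProduct.lift ρ.actl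

/-- Right action as a map `M ⊗ A → M`. -/
def actRA (ρ : KBimod k A M) : M ⊗[k] A →ₗ[k] M := TensorProduct.lift ρ.actr.flip

variable {V}

/-- Left action of `V` (through `ιA : V → A`) as a map `V ⊗ M → M`. -/
def actLV (ιA : V →ₗ[k] A) (ρ : KBimod k A M) : V ⊗[k] M →ₗ[k] M :=
  actLA ρ ∘ₗ LinearMap.rTensor M ιA

/-- Right action of `V` (through `ιA : V → A`) as a map `M ⊗ V → M`. -/
def actRV (ιA : V →ₗ[k] A) (ρ : KBimod k A M) : M ⊗[k] V →ₗ[k] M :=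
  actRA ρ ∘ₗ LinearMap.lTensor M ιA

/-- Left action of `V` in the form `M ⊗ V → M`, `m ⊗ v ↦ v·m`. -/
def actLV' (ιA : V →ₗ[k] A) (ρ : KBimod k A M) : M ⊗[k] V →ₗ[k] M :=
  actLV ιA ρ ∘ₗ (TensorProduct.comm k M V).toLinearMap

variable (k V)

/-- The Koszul cohomology differential
`b_K : Hom(W_p, M) → Hom(W_{p+1}, M)`,
`b_K(f)(x_1⋯x_{p+1}) = f(x_1⋯x_p)·x_{p+1} - (-1)^p x_1·f(x_2⋯x_{p+1})`. -/
def bK (ιA : V →ₗ[k] A) (ρ : KBimod k A M) (p : ℕ) :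
    ((W k V Rq p) →ₗ[k] M) →ₗ[k] ((W k V Rq (p+1)) →ₗ[k] M) :=
  (LinearMap.lcomp k M
      ((LinearMap.lTensor (W k V Rq p) (oneW k V Rq)) ∘ₗ splitAt k V Rq p 1 (p+1) rfl)) ∘ₗ
    (LinearMap.llcomp k _ _ M (actRV ιA ρ)) ∘ₗ (LinearMap.rTensorHom V)
  - ((-1 : ℤ)^p) •
  ((LinearMap.lcomp k M
      ((LinearMap.rTensor (W k V Rq p) (oneW k V Rq)) ∘ₗ splitAt k V Rq 1 p (p+1) (by omega))) ∘ₗ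
    (LinearMap.llcomp k _ _ M (actLV ιA ρ)) ∘ₗ (LinearMap.lTensorHom V))

/-- The Koszul homology differential
`b^K : M ⊗ W_{p+1} → M ⊗ W_p`,
`b^K(m ⊗ x_1⋯x_{p+1}) = (m·x_1) ⊗ x_2⋯x_{p+1} + (-1)^{p+1} (x_{p+1}·m) ⊗ x_1⋯x_p`. -/
def bKh (ιA : V →ₗ[k] A) (ρ : KBimod k A M) (p : ℕ) :
    M ⊗[k] (W k V Rq (p+1)) →ₗ[k] M ⊗[k] (W k V Rq p) :=
  (LinearMap.rTensor (W k V Rq p) (actRV ιA ρ)) ∘ₗ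
    (TensorProduct.assoc k M V (W k V Rq p)).symm.toLinearMap ∘ₗ
    (LinearMap.lTensor M
      ((LinearMap.rTensor (W k V Rq p) (oneW k V Rq)) ∘ₗ splitAt k V Rq 1 p (p+1) (by omega)))
  + ((-1 : ℤ)^(p+1)) •
  ((LinearMap.rTensor (W k V Rq p) (actLV' ιA ρ)) ∘ₗ
    (TensorProduct.assoc k M V (W k V Rq p)).symm.toLinearMap ∘ₗ
    (LinearMap.lTensor M
      ((TensorProduct.comm k (W k V Rq p) V).toLinearMap ∘ₗ
        (LinearMap.lTensor (W k V Rq p) (oneW k V Rq)) ∘ₗ splitAt k V Rq p 1 (p+1) rfl)))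

/-- Koszul cup product of an `M`-valued cochain (on the left) with an `A`-valued cochain
(on the right): `(f ⌣_K g)(x_1⋯x_r) = (-1)^{pq} f(x_1⋯x_p)·g(x_{p+1}⋯x_r)`. -/
def cupMA (ρ : KBimod k A M) (p q r : ℕ) (h : p + q = r)
    (f : (W k V Rq p) →ₗ[k] M) (g : (W k V Rq q) →ₗ[k] A) : (W k V Rq r) →ₗ[k] M :=
  ((-1 : ℤ)^(p*q)) • (actRA ρ ∘ₗ TensorProduct.map f g ∘ₗ splitAt k V Rq p q r h)

/-- Koszul cup product of an `A`-valued cochain (on the left) with an `M`-valued cochain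
(on the right): `(f ⌣_K g)(x_1⋯x_r) = (-1)^{pq} f(x_1⋯x_p)·g(x_{p+1}⋯x_r)`. -/
def cupAM (ρ : KBimod k A M) (p q r : ℕ) (h : p + q = r)
    (f : (W k V Rq p) →ₗ[k] A) (g : (W k V Rq q) →ₗ[k] M) : (W k V Rq r) →ₗ[k] M :=
  ((-1 : ℤ)^(p*q)) • (actLA ρ ∘ₗ TensorProduct.map f g ∘ₗ splitAt k V Rq p q r h)

/-- Left Koszul cap product `g ⌢_K -` of an `A`-valued `q`-cochain with Koszul chains:
`g ⌢_K (m ⊗ x_1⋯x_r) = (-1)^{(r-q)q} (g(x_{s+1}⋯x_r)·m) ⊗ x_1⋯x_s` where `s = r - q`. -/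
def capL (ρ : KBimod k A M) (q s r : ℕ) (h : s + q = r) (g : (W k V Rq q) →ₗ[k] A) :
    M ⊗[k] (W k V Rq r) →ₗ[k] M ⊗[k] (W k V Rq s) :=
  ((-1 : ℤ)^(s*q)) •
    ((LinearMap.rTensor (W k V Rq s)
        (actLA ρ ∘ₗ (TensorProduct.comm k M A).toLinearMap ∘ₗ LinearMap.lTensor M g)) ∘ₗ
      (TensorProduct.assoc k M (W k V Rq q) (W k V Rq s)).symm.toLinearMap ∘ₗ
      (LinearMap.lTensor M
        ((TensorProduct.comm k (W k V Rq s) (W k V Rq q)).toLinearMap ∘ₗ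
          splitAt k V Rq s q r h)))

/-- Right Koszul cap product `- ⌢_K g` of Koszul chains with an `A`-valued `q`-cochain:
`(m ⊗ x_1⋯x_r) ⌢_K g = (-1)^{qr} (m·g(x_1⋯x_q)) ⊗ x_{q+1}⋯x_r`. -/
def capR (ρ : KBimod k A M) (q s r : ℕ) (h : q + s = r) (g : (W k V Rq q) →ₗ[k] A) :
    M ⊗[k] (W k V Rq r) →ₗ[k] M ⊗[k] (W k V Rq s) :=
  ((-1 : ℤ)^(q*r)) •
    ((LinearMap.rTensor (W k V Rq s) (actRA ρ ∘ₗ LinearMap.lTensor M g)) ∘ₗ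
      (TensorProduct.assoc k M (W k V Rq q) (W k V Rq s)).symm.toLinearMap ∘ₗ
      (LinearMap.lTensor M (splitAt k V Rq q s r h)))
variable (A)

/-- The `p`-th term `A ⊗ W_p ⊗ A` of the bimodule Koszul complex `K(A)`. -/
abbrev Kc (p : ℕ) := (A ⊗[k] (W k V Rq p)) ⊗[k] A

variable {A}

/-- `A ⊗ V → A`, `a ⊗ v ↦ a·ι(v)`. -/
def mulV (ιA : V →ₗ[k] A) : A ⊗[k] V →ₗ[k] A :=
  LinearMap.mul' k A ∘ₗ LinearMap.lTensor A ιA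

/-- `V ⊗ A → A`, `v ⊗ a ↦ ι(v)·a`. -/
def vMul (ιA : V →ₗ[k] A) : V ⊗[k] A →ₗ[k] A :=
  LinearMap.mul' k A ∘ₗ LinearMap.rTensor A ιA

/-- The differential of the bimodule Koszul complex `K(A)`:
`d(α ⊗ x_1⋯x_{p+1} ⊗ β) = (α x_1) ⊗ x_2⋯x_{p+1} ⊗ β + (-1)^{p+1} α ⊗ x_1⋯x_p ⊗ (x_{p+1} β)`. -/
def dK (ιA : V →ₗ[k] A) (p : ℕ) : Kc k V Rq A (p+1) →ₗ[k] Kc k V Rq A p :=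
  (LinearMap.rTensor A
    ((LinearMap.rTensor (W k V Rq p) (mulV k V ιA)) ∘ₗ
      (TensorProduct.assoc k A V (W k V Rq p)).symm.toLinearMap ∘ₗ
      (LinearMap.lTensor A
        ((LinearMap.rTensor (W k V Rq p) (oneW k V Rq)) ∘ₗ splitAt k V Rq 1 p (p+1) (by omega)))))
  + ((-1 : ℤ)^(p+1)) •
    ((LinearMap.lTensor (A ⊗[k] (W k V Rq p)) (vMul k V ιA)) ∘ₗ
      (TensorProduct.assoc k (A ⊗[k] (W k V Rq p)) V A).toLinearMap ∘ₗ
      (LinearMap.rTensor A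
        ((TensorProduct.assoc k A (W k V Rq p) V).symm.toLinearMap ∘ₗ
          (LinearMap.lTensor A
            ((LinearMap.lTensor (W k V Rq p) (oneW k V Rq)) ∘ₗ splitAt k V Rq p 1 (p+1) rfl)))))

/-- The map `φ̃ : A^e ⊗ W_p → K(A)_p`, `(α ⊗ β) ⊗ w ↦ β ⊗ w ⊗ α`. -/
def phiT (p : ℕ) : (A ⊗[k] A) ⊗[k] (W k V Rq p) →ₗ[k] Kc k V Rq A p :=
  (TensorProduct.comm k A (A ⊗[k] (W k V Rq p))).toLinearMap ∘ₗ
    (TensorProduct.assoc k A A (W k V Rq p)).toLinearMap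

/-- The left cap action of an `A`-valued `p`-cochain on the Koszul complex:
`f ⌢_K (α ⊗ x_1⋯x_r ⊗ β) = (-1)^{(r-p)p} α ⊗ x_1⋯x_s ⊗ (f(x_{s+1}⋯x_r)β)`, `s = r - p`. -/
def capKL (p s r : ℕ) (h : s + p = r) (f : (W k V Rq p) →ₗ[k] A) :
    Kc k V Rq A r →ₗ[k] Kc k V Rq A s :=
  ((-1 : ℤ)^(s*p)) •
    ((LinearMap.lTensor (A ⊗[k] (W k V Rq s))
        (LinearMap.mul' k A ∘ₗ LinearMap.rTensor A f)) ∘ₗ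
      (TensorProduct.assoc k (A ⊗[k] (W k V Rq s)) (W k V Rq p) A).toLinearMap ∘ₗ
      (LinearMap.rTensor A
        ((TensorProduct.assoc k A (W k V Rq s) (W k V Rq p)).symm.toLinearMap ∘ₗ
          (LinearMap.lTensor A (splitAt k V Rq s p r h)))))

/-- The right cap action of an `A`-valued `p`-cochain on the Koszul complex:
`(α ⊗ x_1⋯x_r ⊗ β) ⌢_K f = (-1)^{pr} (α f(x_1⋯x_p)) ⊗ x_{p+1}⋯x_r ⊗ β`. -/
def capKR (p s r : ℕ) (h : p + s = r) (f : (W k V Rq p) →ₗ[k] A) :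
    Kc k V Rq A r →ₗ[k] Kc k V Rq A s :=
  ((-1 : ℤ)^(p*r)) •
    (LinearMap.rTensor A
      ((LinearMap.rTensor (W k V Rq s) (LinearMap.mul' k A ∘ₗ LinearMap.lTensor A f)) ∘ₗ
        (TensorProduct.assoc k A (W k V Rq p) (W k V Rq s)).symm.toLinearMap ∘ₗ
        (LinearMap.lTensor A (splitAt k V Rq p s r h))))

/-- Right multiplication by `β ⊗ α` in the enveloping algebra `A^e = A ⊗ A^{op}`:
`(x ⊗ y) ↦ xβ ⊗ αy`. -/
def aeR (bb aa : A) : (A ⊗[k] A) →ₗ[k] A ⊗[k] A :=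
  TensorProduct.map (LinearMap.mulRight k bb) (LinearMap.mulLeft k aa)

/-- The bimodule `A^e = A ⊗ A^{op}` (via its left regular `A^e`-module structure):
`a·(α ⊗ β)·b = aα ⊗ βb`. -/
def bimodAe : KBimod k A (A ⊗[k] A) where
  actl := (LinearMap.rTensorHom A) ∘ₗ (LinearMap.mul k A)
  actr := (LinearMap.lTensorHom A) ∘ₗ (LinearMap.mul k A).flip
  actl_one := fun m => by
    induction m using TensorProduct.induction_on with
    | zero => simp
    | tmul x y => simp
    | add x y hx hy => simp_all
  actl_mul := fun a b m => by
    induction m using TensorProduct.induction_on with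
    | zero => simp
    | tmul x y => simp [mul_assoc]
    | add x y hx hy => simp_all
  actr_one := fun m => by
    induction m using TensorProduct.induction_on with
    | zero => simp
    | tmul x y => simp
    | add x y hx hy => simp_all
  actr_mul := fun a b m => by
    induction m using TensorProduct.induction_on with
    | zero => simp
    | tmul x y => simp [mul_assoc]
    | add x y hx hy => simp_all
  actl_actr := fun a b m => by
    induction m using TensorProduct.induction_on with
    | zero => simp
    | tmul x y => simp
    | add x y hx hy => simp_all
/-- `(p, n-p)`-shuffles: permutations increasing on the first `p` and on the last `n - p`
positions. -/
def IsShuffle (n p : ℕ) (σ : Equiv.Perm (Fin n)) : Prop :=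
  (∀ i j : Fin n, (i : ℕ) < p → (j : ℕ) < p → i < j → σ i < σ j) ∧
  (∀ i j : Fin n, p ≤ (i : ℕ) → p ≤ (j : ℕ) → i < j → σ i < σ j)

variable {n : ℕ}

/-- The element `[x_{c(1)} ∧ ⋯ ∧ x_{c(p)}] = Ant_p(x_{c(1)} ⊗ ⋯ ⊗ x_{c(p)})` of `W_p`. -/
def wedgeB (x : Module.Basis (Fin n) k V) (p : ℕ) (c : Fin p → Fin n) : W k V Rq p :=
  projW k V Rq p (Ant k V p (PiTensorProduct.tprod k (fun i => x (c i))))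

open Classical in
/-- The duality map `θ_M : Hom(W_p, M) → M ⊗ W_{n-p}` (with `s = n - p`), i.e. the Koszul cap
product with the fundamental class `c = 1 ⊗ [x_1 ∧ ⋯ ∧ x_n]`:
`θ_M(f) = (-1)^{np} Σ_{σ ∈ Sh(p,s)} sgn(σ) f([x_{σ(1)} ∧ ⋯ ∧ x_{σ(p)}]) ⊗
[x_{σ(p+1)} ∧ ⋯ ∧ x_{σ(n)}]`. -/
def theta (x : Module.Basis (Fin n) k V) (p s : ℕ) (h : p + s = n) :
    ((W k V Rq p) →ₗ[k] M) →ₗ[k] M ⊗[k] (W k V Rq s) :=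
  ((-1 : ℤ)^(n*p)) • ∑ σ : Equiv.Perm (Fin n),
    if IsShuffle n p σ then
      (Equiv.Perm.sign σ : ℤ) •
        (((TensorProduct.mk k M (W k V Rq s)).flip
            (wedgeB k V Rq x s (fun i => σ (Fin.cast h (Fin.natAdd p i))))) ∘ₗ
          (LinearMap.applyₗ (wedgeB k V Rq x p (fun i => σ (Fin.castLE (by omega) i)))))
    else 0

/-- Koszul cocycles: the kernel of `b_K`. -/
def cocycles (ιA : V →ₗ[k] A) (ρ : KBimod k A M) (p : ℕ) :
    Submodule k ((W k V Rq p) →ₗ[k] M) :=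
  LinearMap.ker (bK k V Rq ιA ρ p)

/-- Koszul coboundaries: the image of `b_K` (trivial for `p = 0`). -/
def cobound (ιA : V →ₗ[k] A) (ρ : KBimod k A M) (p : ℕ) :
    Submodule k ((W k V Rq p) →ₗ[k] M) :=
  ⨆ (q : ℕ) (h : q + 1 = p),
    Submodule.map (LinearEquiv.arrowCongr (wCast k V Rq h) (LinearEquiv.refl k M)).toLinearMap
      (LinearMap.range (bK k V Rq ιA ρ q))

/-- Koszul cohomology `HK^p(A, M)`. -/
def HKco (ιA : V →ₗ[k] A) (ρ : KBimod k A M) (p : ℕ) :=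
  (cocycles k V Rq ιA ρ p) ⧸
    (Submodule.comap (cocycles k V Rq ιA ρ p).subtype (cobound k V Rq ιA ρ p))

instance (ιA : V →ₗ[k] A) (ρ : KBimod k A M) (p : ℕ) :
    AddCommGroup (HKco k V Rq ιA ρ p) := by unfold HKco; infer_instance
instance (ιA : V →ₗ[k] A) (ρ : KBimod k A M) (p : ℕ) :
    Module k (HKco k V Rq ιA ρ p) := by unfold HKco; infer_instance

/-- Koszul cycles: the kernel of `b^K` (everything in degree `0`). -/
def cycles (ιA : V →ₗ[k] A) (ρ : KBimod k A M) (d : ℕ) :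
    Submodule k (M ⊗[k] (W k V Rq d)) :=
  ⨅ (e : ℕ) (h : e + 1 = d),
    LinearMap.ker ((bKh k V Rq ιA ρ e) ∘ₗ
      (TensorProduct.congr (LinearEquiv.refl k M) (wCast k V Rq h.symm)).toLinearMap)

/-- Koszul boundaries: the image of `b^K`. -/
def bound (ιA : V →ₗ[k] A) (ρ : KBimod k A M) (d : ℕ) :
    Submodule k (M ⊗[k] (W k V Rq d)) :=
  LinearMap.range (bKh k V Rq ιA ρ d)

instance instCyclesAddCommGroup (ιA : V →ₗ[k] A) (ρ : KBimod k A M) (d : ℕ) :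
    AddCommGroup ↥(cycles k V Rq ιA ρ d) := Submodule.addCommGroup _

instance instCyclesModule (ιA : V →ₗ[k] A) (ρ : KBimod k A M) (d : ℕ) :
    Module k ↥(cycles k V Rq ιA ρ d) := Submodule.module _

/-- Koszul homology `HK_d(A, M)`. -/
def HKho (ιA : V →ₗ[k] A) (ρ : KBimod k A M) (d : ℕ) :=
  ↥(cycles k V Rq ιA ρ d) ⧸
    (Submodule.comap (cycles k V Rq ιA ρ d).subtype (bound k V Rq ιA ρ d))

instance (ιA : V →ₗ[k] A) (ρ : KBimod k A M) (d : ℕ) :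
    AddCommGroup (HKho k V Rq ιA ρ d) := by unfold HKho; infer_instance
instance (ιA : V →ₗ[k] A) (ρ : KBimod k A M) (d : ℕ) :
    Module k (HKho k V Rq ιA ρ d) := by unfold HKho; infer_instance

end

/-- The canonical linear map `V → S(V)`. -/
noncomputable def ιS (k : Type*) [Field k] (V : Type*) [AddCommGroup V] [Module k V] :
    V →ₗ[k] SV k V := ιQ k V (Rsym k V)


/-!
Every element of `R = span {x ⊗ y - y ⊗ x}` changes sign when its two factors are swapped.
Since `W_{n+1} ⊆ V^{⊗i} ⊗ R ⊗ V^{⊗j}` for all `i + 2 + j = n + 1`, every `w ∈ W_{n+1}` changes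
sign under each adjacent transposition of its factors, hence is multiplied by `sgn σ` under every
permutation `σ`. Splitting off the last factor of `w` and moving it to the front is splitting off
the first factor after the cyclic permutation `finRotate`, of sign `(-1)^p`. For a central
bimodule the two terms of `b^K` then carry the signs `1` and `(-1)^{p+1} (-1)^p = -1`, and cancel.
-/

open Equiv

theorem PiTensorProduct.reindex_eq_sign_smul_of_swap_castSucc_succ {R M : Type*} [CommRing R]
    [AddCommGroup M] [Module R M] {n : ℕ} {w : ⨂[R] _ : Fin (n + 1), M}
    (hw : ∀ i : Fin n, reindex R (fun _ => M) (swap i.castSucc i.succ) w = -w)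
    (σ : Perm (Fin (n + 1))) :
    reindex R (fun _ => M) σ w = (Perm.sign σ : ℤ) • w := by
  induction σ using Submonoid.induction_of_closure_eq_top_right
    (Perm.mclosure_swap_castSucc_succ n) with
  | one => simp [Perm.one_def, reindex_refl]
  | mul_right σ τ hτ ih =>
    obtain ⟨i, rfl⟩ := hτ
    rw [Perm.mul_def, ← reindex_reindex, hw, map_neg, ih, ← Perm.mul_def, Perm.sign_mul,
      Perm.sign_swap Fin.castSucc_lt_succ.ne]
    simp

theorem Fin.append_append_comp_swap {α : Type*} {i j : ℕ} (f : Fin i → α) (g : Fin 2 → α)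
    (h : Fin j → α) :
    Fin.append f (Fin.append g h) ∘ swap ⟨i, by omega⟩ ⟨i + 1, by omega⟩ =
      Fin.append f (Fin.append (g ∘ swap 0 1) h) := by
  funext t
  refine Fin.addCases (fun a => ?_) (fun b => ?_) t
  · rw [Function.comp_apply, swap_apply_of_ne_of_ne] <;> simp [Fin.ext_iff] <;> omega
  · refine Fin.addCases (fun c => ?_) (fun d => ?_) b
    · have hi : (⟨i, by omega⟩ : Fin (i + (2 + j))) = Fin.natAdd i (Fin.castAdd j 0) := rfl
      have hi' : (⟨i + 1, by omega⟩ : Fin (i + (2 + j))) = Fin.natAdd i (Fin.castAdd j 1) := rfl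
      fin_cases c <;> simp [hi, hi']
    · rw [Function.comp_apply, swap_apply_of_ne_of_ne] <;> simp [Fin.ext_iff]; omega

section TensorPowers

variable (k : Type*) [Field k] (V : Type*) [AddCommGroup V] [Module k V]

theorem tpMul_tprod (p q : ℕ) (f : Fin p → V) (g : Fin q → V) :
    tpMul k V p q (tprod k f ⊗ₜ tprod k g) = tprod k (Fin.append f g) :=
  TensorPower.tprod_mul_tprod k f g

theorem tpCast_tprod {m n : ℕ} (h : m = n) (f : Fin m → V) :
    tpCast k V h (tprod k f) = tprod k (f ∘ Fin.cast h.symm) :=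
  TensorPower.cast_tprod k V h f

theorem tp2_symm_tmul (x y : V) : (tp2 k V).symm (x ⊗ₜ y) = tprod k ![x, y] := by
  simp only [tp2, oneEquiv, LinearEquiv.trans_symm, LinearEquiv.trans_apply, congr_symm_tmul,
    LinearEquiv.symm_symm, subsingletonEquiv_symm_apply']
  rw [tpMul_tprod]
  congr 1
  funext i; fin_cases i <;> rfl

theorem reindex_swap_comp_tpMul_tpMul (i j : ℕ) :
    (reindex k (fun _ => V)
        (swap (⟨i, by omega⟩ : Fin (i + (2 + j))) ⟨i + 1, by omega⟩)).toLinearMap ∘ₗ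
      (tpMul k V i (2 + j)).toLinearMap ∘ₗ (tpMul k V 2 j).toLinearMap.lTensor (TP k V i) =
    (tpMul k V i (2 + j)).toLinearMap ∘ₗ
      ((tpMul k V 2 j).toLinearMap ∘ₗ
        (reindex k (fun _ => V) (swap 0 1)).toLinearMap.rTensor (TP k V j)).lTensor (TP k V i) := by
  ext f g h
  simp only [LinearMap.compMultilinearMap_apply, AlgebraTensorModule.curry_apply,
    LinearMap.restrictScalars_self, TensorProduct.curry_apply, LinearMap.coe_comp,
    LinearEquiv.coe_coe, Function.comp_apply, LinearMap.lTensor_tmul, LinearMap.rTensor_tmul,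
    reindex_tprod, symm_swap]
  rw [tpMul_tprod, tpMul_tprod, tpMul_tprod, tpMul_tprod, reindex_tprod, symm_swap]
  exact congrArg (PiTensorProduct.tprod k) (Fin.append_append_comp_swap f g h)

theorem reindex_swap_tpCast {m n : ℕ} (h : m = n) (a b : Fin m) (v : TP k V m) :
    reindex k (fun _ => V) (swap (Fin.cast h a) (Fin.cast h b)) (tpCast k V h v) =
      tpCast k V h (reindex k (fun _ => V) (swap a b) v) := by
  subst h
  simp [tpCast]

theorem tpMul_comm_eq_tpCast_reindex_finRotate (p : ℕ) (h : p + 1 = 1 + p) :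
    (tpMul k V 1 p).toLinearMap ∘ₗ (TensorProduct.comm k (TP k V p) (TP k V 1)).toLinearMap =
      (tpCast k V h).toLinearMap ∘ₗ (reindex k (fun _ => V) (finRotate (p + 1))).toLinearMap ∘ₗ
        (tpMul k V p 1).toLinearMap := by
  ext f g
  simp only [LinearMap.compMultilinearMap_apply, AlgebraTensorModule.curry_apply,
    LinearMap.restrictScalars_self, TensorProduct.curry_apply, LinearMap.coe_comp,
    LinearEquiv.coe_coe, Function.comp_apply, comm_tmul]
  rw [tpMul_tprod, tpMul_tprod, reindex_tprod, tpCast_tprod, Fin.append_left_eq_cons,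
    Fin.append_right_eq_snoc, Fin.snoc_eq_cons_rotate]
  simp only [apply_symm_apply]

theorem comm_tpMul_symm (p : ℕ) (h : p + 1 = 1 + p) (v : TP k V (p + 1)) :
    TensorProduct.comm k (TP k V p) (TP k V 1) ((tpMul k V p 1).symm v) =
      (tpMul k V 1 p).symm (tpCast k V h (reindex k (fun _ => V) (finRotate (p + 1)) v)) := by
  rw [LinearEquiv.eq_symm_apply]
  simpa using LinearMap.congr_fun (tpMul_comm_eq_tpCast_reindex_finRotate k V p h)
    ((tpMul k V p 1).symm v)

theorem reindex_swap_of_mem_Rsym {r : TP k V 2} (hr : r ∈ Rsym k V) :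
    reindex k (fun _ => V) (swap 0 1) r = -r := by
  induction hr using Submodule.span_induction with
  | mem w hw =>
    obtain ⟨x, y, rfl⟩ := hw
    have hflip : ∀ a b : V, reindex k (fun _ => V) (swap 0 1) ((tp2 k V).symm (a ⊗ₜ b)) =
        (tp2 k V).symm (b ⊗ₜ a) := fun a b => by
      rw [tp2_symm_tmul, tp2_symm_tmul, reindex_tprod]
      congr 1
      funext t; fin_cases t <;> rfl
    rw [map_sub, map_sub, hflip, hflip, neg_sub]
  | zero => simp
  | add u v _ _ hu hv => rw [map_add, hu, hv, neg_add]
  | smul c u _ hu => rw [map_smul, hu, smul_neg]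

theorem reindex_swap_of_mem_sandwich_Rsym {i j : ℕ} {v : TP k V (i + 2 + j)}
    (hv : v ∈ sandwich k V (Rsym k V) i j) :
    reindex k (fun _ => V) (swap ⟨i, by omega⟩ ⟨i + 1, by omega⟩) v = -v := by
  obtain ⟨z, rfl⟩ := hv
  set σ := swap (⟨i, by omega⟩ : Fin (i + (2 + j))) ⟨i + 1, by omega⟩
  set τ := reindex k (fun _ => V) (swap (0 : Fin 2) 1)
  have hR : τ.toLinearMap ∘ₗ (Rsym k V).subtype = -(Rsym k V).subtype :=
    LinearMap.ext fun r => reindex_swap_of_mem_Rsym k V r.2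
  have hmaps :
      (reindex k (fun _ => V) σ).toLinearMap ∘ₗ (tpMul k V i (2 + j)).toLinearMap ∘ₗ
          ((tpMul k V 2 j).toLinearMap ∘ₗ (Rsym k V).subtype.rTensor (TP k V j)).lTensor _ =
        -((tpMul k V i (2 + j)).toLinearMap ∘ₗ
          ((tpMul k V 2 j).toLinearMap ∘ₗ (Rsym k V).subtype.rTensor (TP k V j)).lTensor _) :=
    calc _ = ((reindex k (fun _ => V) σ).toLinearMap ∘ₗ (tpMul k V i (2 + j)).toLinearMap ∘ₗ
              (tpMul k V 2 j).toLinearMap.lTensor (TP k V i)) ∘ₗ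
            ((Rsym k V).subtype.rTensor (TP k V j)).lTensor (TP k V i) := by
          rw [LinearMap.lTensor_comp]; rfl
      _ = (tpMul k V i (2 + j)).toLinearMap ∘ₗ ((tpMul k V 2 j).toLinearMap ∘ₗ
            (τ.toLinearMap ∘ₗ (Rsym k V).subtype).rTensor (TP k V j)).lTensor (TP k V i) := by
          rw [reindex_swap_comp_tpMul_tpMul, LinearMap.rTensor_comp, LinearMap.lTensor_comp,
            LinearMap.lTensor_comp, LinearMap.lTensor_comp]; rfl
      _ = _ := by
          rw [hR, LinearMap.rTensor_neg, LinearMap.comp_neg, LinearMap.lTensor_neg,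
            LinearMap.comp_neg]
  have hij : i + (2 + j) = i + 2 + j := by omega
  simp only [LinearMap.coe_comp, Function.comp_apply, LinearEquiv.coe_coe]
  rw [show (⟨i, _⟩ : Fin (i + 2 + j)) = Fin.cast hij ⟨i, by omega⟩ from rfl,
    show (⟨i + 1, _⟩ : Fin (i + 2 + j)) = Fin.cast hij ⟨i + 1, by omega⟩ from rfl,
    reindex_swap_tpCast]
  have hz := LinearMap.congr_fun hmaps z
  simp only [LinearMap.coe_comp, Function.comp_apply, LinearEquiv.coe_coe,
    LinearMap.neg_apply] at hz
  rw [hz, map_neg]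

theorem reindex_swap_castSucc_succ_of_mem_W_Rsym {n : ℕ} {w : TP k V (n + 1)}
    (hw : w ∈ W k V (Rsym k V) (n + 1)) (i : Fin n) :
    reindex k (fun _ => V) (swap i.castSucc i.succ) w = -w := by
  have hn : (i : ℕ) + 2 + (n - 1 - i) = n + 1 := by omega
  simp only [W, Submodule.mem_iInf] at hw
  obtain ⟨v, hv, rfl⟩ := hw i (n - 1 - i) hn
  rw [show i.castSucc = Fin.cast hn ⟨i, by omega⟩ from rfl,
    show i.succ = Fin.cast hn ⟨i + 1, by omega⟩ from rfl, LinearEquiv.coe_coe,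
    reindex_swap_tpCast, reindex_swap_of_mem_sandwich_Rsym k V hv, map_neg]

theorem reindex_eq_sign_smul_of_mem_W_Rsym {n : ℕ} {w : TP k V (n + 1)}
    (hw : w ∈ W k V (Rsym k V) (n + 1)) (σ : Perm (Fin (n + 1))) :
    reindex k (fun _ => V) σ w = (Perm.sign σ : ℤ) • w :=
  reindex_eq_sign_smul_of_swap_castSucc_succ (reindex_swap_castSucc_succ_of_mem_W_Rsym k V hw) σ

variable (Rq : Submodule k (TP k V 2))

theorem oneW_comp_projW_one : oneW k V Rq ∘ₗ projW k V Rq 1 = (oneEquiv k V).toLinearMap := by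
  have hleft : projW k V Rq 1 ∘ₗ (W k V Rq 1).subtype = LinearMap.id :=
    (LinearMap.exists_leftInverse_of_injective (W k V Rq 1).subtype
      (Submodule.ker_subtype _)).choose_spec
  have hmem : ∀ x, x ∈ W k V Rq 1 := by
    simp only [W, Submodule.mem_iInf]
    omega
  refine LinearMap.ext fun x => ?_
  have hx := LinearMap.congr_fun hleft ⟨x, hmem x⟩
  simp only [LinearMap.coe_comp, Function.comp_apply, Submodule.subtype_apply,
    LinearMap.id_apply] at hx
  simp [oneW, hx]

theorem rTensor_oneW_splitAt_one (p : ℕ) (h : 1 + p = p + 1) (w : W k V Rq (p + 1)) :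
    LinearMap.rTensor _ (oneW k V Rq) (splitAt k V Rq 1 p (p + 1) h w) =
      TensorProduct.map (oneEquiv k V).toLinearMap (projW k V Rq p)
        ((tpMul k V 1 p).symm (tpCast k V h.symm w)) := by
  simp [splitAt, oneW_comp_projW_one]

theorem comm_lTensor_oneW_splitAt_last (p : ℕ) (h : p + 1 = 1 + p) (w : W k V Rq (p + 1)) :
    TensorProduct.comm k _ _
        (LinearMap.lTensor _ (oneW k V Rq) (splitAt k V Rq p 1 (p + 1) rfl w)) =
      TensorProduct.map (oneEquiv k V).toLinearMap (projW k V Rq p)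
        ((tpMul k V 1 p).symm (tpCast k V h (reindex k (fun _ => V) (finRotate (p + 1)) w))) := by
  have hcast : tpCast k V (rfl : p + 1 = p + 1) = LinearEquiv.refl k _ :=
    TensorPower.cast_refl k V rfl
  simp only [splitAt, LinearMap.coe_comp, Function.comp_apply, LinearEquiv.coe_coe, hcast,
    LinearEquiv.refl_apply, Submodule.subtype_apply, LinearMap.lTensor_map, oneW_comp_projW_one]
  rw [← map_comm, comm_tpMul_symm k V p h]

theorem comm_lTensor_oneW_splitAt_last_Rsym (p : ℕ) (h : 1 + p = p + 1)
    (w : W k V (Rsym k V) (p + 1)) :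
    TensorProduct.comm k _ _ (LinearMap.lTensor _ (oneW k V (Rsym k V))
        (splitAt k V (Rsym k V) p 1 (p + 1) rfl w)) =
      ((-1 : ℤ) ^ p) • LinearMap.rTensor _ (oneW k V (Rsym k V))
        (splitAt k V (Rsym k V) 1 p (p + 1) h w) := by
  rw [comm_lTensor_oneW_splitAt_last _ _ _ p h.symm, reindex_eq_sign_smul_of_mem_W_Rsym k V w.2,
    sign_finRotate, rTensor_oneW_splitAt_one]
  simp

end TensorPowers

theorem actLV'_eq_actRV {k A M V : Type*} [Field k] [Ring A] [Algebra k A] [AddCommGroup M]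
    [Module k M] [AddCommGroup V] [Module k V] (ιA : V →ₗ[k] A) (ρ : KBimod k A M)
    (hcentral : ∀ a m, ρ.actl a m = ρ.actr a m) : actLV' ιA ρ = actRV ιA ρ := by
  ext m v
  simp [actLV', actLV, actRV, actLA, actRA, hcentral]

/-- for `A = S(V)` and an `A`-central `A`-bimodule `M`, the Koszul homology
differential vanishes: `b^K = 0` on `M ⊗ W_p` for every `p ≥ 1`. -/
theorem statement4 (k : Type*) [Field k] (V : Type*) [AddCommGroup V] [Module k V]
    (M : Type*) [AddCommGroup M] [Module k M] (ρ : KBimod k (SV k V) M)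
    (hcentral : ∀ (a : SV k V) (m : M), ρ.actl a m = ρ.actr a m)
    (p : ℕ) :
    bKh k V (Rsym k V) (ιS k V) ρ p = 0 := by
  ext m w
  simp only [bKh, actLV'_eq_actRV _ ρ hcentral, AlgebraTensorModule.curry_apply,
    LinearMap.restrictScalars_self, TensorProduct.curry_apply, LinearMap.add_apply,
    LinearMap.coe_comp, LinearEquiv.coe_coe, Function.comp_apply, LinearMap.lTensor_tmul,
    LinearMap.smul_apply, LinearMap.zero_apply]
  rw [comm_lTensor_oneW_splitAt_last_Rsym k V p (by omega) w, tmul_smul, map_zsmul, map_zsmul,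
    smul_smul, ← pow_add, Odd.neg_one_pow ⟨p, by ring⟩, neg_one_smul, add_neg_cancel]
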